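/- Let (X_i, Y_i), i = 1, ..., n+1, be exchangeable random pairs in ℝ^p × ℝ, let f̂ : ℝ^p → ℝ be a fixed measurable function, let w_1, ..., w_K : ℝ^p → (0, ∞) be fixed measurable candidate weight functions, and let κ be a random index in {1, ..., K} that is independent of ((X_1, Y_1), ..., (X_{n+1}, Y_{n+1})). Define scores R_i = |Y_i − f̂(X_i)| · w_κ(X_i). Let α ∈ (0,1) satisfy ⌈(1−α)(n+1)⌉ ≤ n and let q̂ be the ⌈(1−α)(n+1)⌉-th smallest value among R_1, ..., R_n. Then P(R_{n+1} ≤ q̂) ≥ 1 − α; i.e., data-driven weight selection using data independent of the calibration and test points preserves marginal coverage exactly. -/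

import Mathlib

/-! Since `κ` is independent of the data, the law of `(κ, Z ∘ π)` is the product of the
marginals and does not depend on the permutation `π`; hence the scores `R_i = s(κ, Z_i)` are
exchangeable. For exchangeable scores and `k = ⌈(1 - α)(n + 1)⌉`, the `n + 1` events "fewer
than `k` scores lie strictly below `R_j`" are equally likely, and at every outcome at least `k`
of them occur, so each has probability at least `k / (n + 1) ≥ 1 - α`. For `j = n + 1` the
event forces `R_{n+1} ≤ q̂`. -/

open MeasureTheory ProbabilityTheory

/-- The `k`-th smallest value among `R 0, …, R (n-1)` (1-indexed: `k = 1` gives the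
minimum), defined as the least `t` such that at least `k` of the values are `≤ t`. -/
noncomputable def kthSmallest {n : ℕ} (R : Fin n → ℝ) (k : ℕ) : ℝ :=
  sInf {t : ℝ | k ≤ (Finset.univ.filter (fun i => R i ≤ t)).card}

open Finset
open scoped ENNReal

def Exchangeable {Ω ι E : Type*} [MeasurableSpace Ω] [MeasurableSpace E]
    (P : Measure Ω) (X : Ω → ι → E) : Prop :=
  ∀ π : Equiv.Perm ι, P.map (fun ω i => X ω (π i)) = P.map X

noncomputable def strictRank {ι : Type*} [Fintype ι] (x : ι → ℝ) (j : ι) : ℕ :=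
  #{i | x i < x j}

section Exchangeable

variable {Ω ι E F β : Type*} [MeasurableSpace Ω] [MeasurableSpace E] [MeasurableSpace F]
  [MeasurableSpace β] {P : Measure Ω} {X : Ω → ι → E}

lemma Exchangeable.comp (hX : Exchangeable P X) (hXm : Measurable X) {g : E → F}
    (hg : Measurable g) : Exchangeable P (fun ω i => g (X ω i)) := by
  intro π
  have hgπ : Measurable fun (x : ι → E) (i : ι) => g (x i) := by fun_prop
  have hπ : Measurable fun (x : ι → E) (i : ι) => x (π i) := by fun_prop
  calc P.map (fun ω i => g (X ω (π i)))
      = (P.map (fun ω i => X ω (π i))).map (fun x i => g (x i)) :=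
        (Measure.map_map hgπ (hπ.comp hXm)).symm
    _ = P.map (fun ω i => g (X ω i)) := by rw [hX π, Measure.map_map hgπ hXm]; rfl

lemma Exchangeable.prodMk_of_indepFun [IsFiniteMeasure P] (hX : Exchangeable P X)
    (hXm : Measurable X) {κ : Ω → β} (hκ : Measurable κ) (hind : IndepFun κ X P) :
    Exchangeable P (fun ω i => (κ ω, X ω i)) := by
  intro π
  set σ : (ι → E) → ι → E := fun x i => x (π i)
  have hσ : Measurable σ := by fun_prop
  have hpair : Measurable fun (q : β × (ι → E)) (i : ι) => (q.1, q.2 i) := by fun_prop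
  have hindσ : IndepFun κ (σ ∘ X) P := hind.comp measurable_id hσ
  calc P.map (fun ω i => (κ ω, X ω (π i)))
      = (P.map fun ω => (κ ω, σ (X ω))).map fun q i => (q.1, q.2 i) :=
        (Measure.map_map hpair (hκ.prodMk (hσ.comp hXm))).symm
    _ = ((P.map κ).prod (P.map X)).map fun q i => (q.1, q.2 i) := by
        have hlaw : P.map (fun ω => (κ ω, σ (X ω))) = (P.map κ).prod (P.map (σ ∘ X)) :=
          (indepFun_iff_map_prod_eq_prod_map_map hκ.aemeasurable
            (hσ.comp hXm).aemeasurable).mp hindσ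
        rw [hlaw]
        exact congrArg (fun ν => ((P.map κ).prod ν).map _) (hX π)
    _ = P.map (fun ω i => (κ ω, X ω i)) := by
        rw [← (indepFun_iff_map_prod_eq_prod_map_map hκ.aemeasurable hXm.aemeasurable).mp hind,
          Measure.map_map hpair (hκ.prodMk hXm)]
        rfl

end Exchangeable

section Rank

variable {ι : Type*} [Fintype ι]

lemma strictRank_comp_perm (x : ι → ℝ) (π : Equiv.Perm ι) (j : ι) :
    strictRank (fun i => x (π i)) j = strictRank x (π j) := by
  simp only [strictRank, card_filter]
  exact Equiv.sum_comp π (fun i => if x i < x (π j) then 1 else 0)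

lemma measurable_strictRank (j : ι) : Measurable fun x : ι → ℝ => strictRank x j := by
  simp only [strictRank, card_filter]
  exact Finset.measurable_sum _ fun i _ => Measurable.ite
    (measurableSet_lt (measurable_pi_apply i) (measurable_pi_apply j))
    measurable_const measurable_const

/-- Otherwise the lowest coordinate of rank at least `k` would have `k` coordinates below it,
all of rank less than `k`. -/
lemma le_card_filter_strictRank_lt (x : ι → ℝ) {k : ℕ} (hk : k ≤ Fintype.card ι) :
    k ≤ #{j | strictRank x j < k} := by
  by_contra! hlt
  have hne : (univ.filter fun j => ¬strictRank x j < k).Nonempty := by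
    rw [nonempty_iff_ne_empty, Ne, filter_eq_empty_iff]
    intro hall
    rw [filter_true_of_mem fun j _ => not_not.1 (hall (mem_univ j)), card_univ] at hlt
    omega
  obtain ⟨j, hj, hmin⟩ := exists_min_image _ x hne
  have hbelow : (univ.filter fun i => x i < x j) ⊆ univ.filter fun j => strictRank x j < k :=
    fun i hi => by_contra fun hi' =>
      (mem_filter.1 hi).2.not_ge (hmin i (by simpa using hi'))
  exact (mem_filter.1 hj).2 ((card_le_card hbelow).trans_lt hlt)

end Rank

lemma le_kthSmallest {n : ℕ} (R : Fin n → ℝ) {k : ℕ} (hk : k ≤ n) {r : ℝ}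
    (h : #{i | R i < r} < k) : r ≤ kthSmallest R k := by
  obtain ⟨M, hM⟩ := (Set.finite_range R).bddAbove
  refine le_csInf ⟨M, ?_⟩ fun t ht => ?_
  · have hall : univ.filter (fun i => R i ≤ M) = univ :=
      filter_true_of_mem fun i _ => hM (Set.mem_range_self i)
    simpa [hall] using hk
  · by_contra! htr
    have hsub : (univ.filter fun i => R i ≤ t) ⊆ univ.filter fun i => R i < r := fun i hi => by
      simp only [mem_filter, mem_univ, true_and] at hi ⊢
      exact hi.trans_lt htr
    exact (ht.trans (card_le_card hsub)).not_gt h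

lemma le_kthSmallest_init_of_strictRank_lt {n k : ℕ} (x : Fin (n + 1) → ℝ) (hk : k ≤ n)
    (h : strictRank x (Fin.last n) < k) :
    x (Fin.last n) ≤ kthSmallest (fun i : Fin n => x i.castSucc) k := by
  refine le_kthSmallest _ hk (lt_of_le_of_lt ?_ h)
  refine card_le_card_of_injOn Fin.castSucc (fun i hi => ?_) (Fin.castSucc_injective n).injOn
  simpa using hi

open Classical in
lemma mul_measure_univ_le_sum_of_le_card {α ι : Type*} [MeasurableSpace α] [Fintype ι]
    {μ : Measure α} {A : ι → Set α} (hA : ∀ j, MeasurableSet (A j)) {k : ℕ}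
    (h : ∀ a, k ≤ #{j | a ∈ A j}) : k * μ Set.univ ≤ ∑ j, μ (A j) := by
  calc k * μ Set.univ = ∫⁻ _, (k : ℝ≥0∞) ∂μ := by simp
    _ ≤ ∫⁻ a, ∑ j, (A j).indicator 1 a ∂μ := lintegral_mono fun a => by
        simpa [Set.indicator_apply, ← natCast_card_filter] using h a
    _ = ∑ j, μ (A j) := by
        rw [lintegral_finsetSum _ fun j _ => measurable_one.indicator (hA j)]
        simp [lintegral_indicator_one (hA _)]

section Conformal

variable {Ω ι : Type*} [MeasurableSpace Ω] [Fintype ι] {P : Measure Ω} {S : Ω → ι → ℝ}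

lemma Exchangeable.measure_strictRank_lt_eq (hS : Exchangeable P S) (hSm : Measurable S)
    (k : ℕ) (i j : ι) :
    P {ω | strictRank (S ω) i < k} = P {ω | strictRank (S ω) j < k} := by
  classical
  set π := Equiv.swap i j
  have hA : MeasurableSet {x : ι → ℝ | strictRank x j < k} :=
    measurable_strictRank j measurableSet_Iio
  have hSπ : Measurable fun ω l => S ω (π l) := by fun_prop
  calc P {ω | strictRank (S ω) i < k}
      = P ((fun ω l => S ω (π l)) ⁻¹' {x | strictRank x j < k}) := by
        simp only [Set.preimage_ofPred_eq, strictRank_comp_perm, π, Equiv.swap_apply_right]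
    _ = P.map S {x | strictRank x j < k} := by rw [← Measure.map_apply hSπ hA, hS π]
    _ = P {ω | strictRank (S ω) j < k} := Measure.map_apply hSm hA

lemma Exchangeable.le_card_mul_measure_strictRank_lt [IsProbabilityMeasure P]
    (hS : Exchangeable P S) (hSm : Measurable S) {k : ℕ} (hk : k ≤ Fintype.card ι) (j : ι) :
    (k : ℝ≥0∞) ≤ Fintype.card ι * P {ω | strictRank (S ω) j < k} := by
  have hA : ∀ i, MeasurableSet {ω | strictRank (S ω) i < k} := fun i =>
    (measurable_strictRank i).comp hSm measurableSet_Iio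
  calc (k : ℝ≥0∞) = k * P Set.univ := by simp
    _ ≤ ∑ i, P {ω | strictRank (S ω) i < k} :=
        mul_measure_univ_le_sum_of_le_card hA fun ω => by
          simpa using le_card_filter_strictRank_lt (S ω) hk
    _ = Fintype.card ι * P {ω | strictRank (S ω) j < k} := by
        simp [hS.measure_strictRank_lt_eq hSm k _ j]

end Conformal

lemma ENNReal.ofReal_le_of_le_natCast_mul {a : ℝ} {m k : ℕ} {x : ℝ≥0∞} (hm : 0 < m)
    (ha : a * m ≤ k) (hk : (k : ℝ≥0∞) ≤ m * x) : ENNReal.ofReal a ≤ x :=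
  calc ENNReal.ofReal a ≤ ENNReal.ofReal (k / m) :=
        ENNReal.ofReal_le_ofReal ((le_div_iff₀ (by positivity)).2 ha)
    _ = k / m := by
        rw [ENNReal.ofReal_div_of_pos (by positivity), ENNReal.ofReal_natCast,
          ENNReal.ofReal_natCast]
    _ ≤ x := ENNReal.div_le_of_le_mul' hk

theorem coverage_data_driven_weight_selection_general
    {Ω : Type*} [MeasurableSpace Ω] (P : Measure Ω) [IsProbabilityMeasure P]
    (p n K : ℕ)
    (Z : Fin (n + 1) → Ω → (Fin p → ℝ) × ℝ)
    (hZmeas : ∀ i, Measurable (Z i))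
    (hexch : ∀ π : Equiv.Perm (Fin (n + 1)),
      Measure.map (fun ω => fun i => Z (π i) ω) P
        = Measure.map (fun ω => fun i => Z i ω) P)
    (fhat : (Fin p → ℝ) → ℝ) (hf : Measurable fhat)
    (w : Fin K → (Fin p → ℝ) → ℝ)
    (hw : ∀ k, Measurable (w k))
    (κ : Ω → Fin K) (hκmeas : Measurable κ)
    (hκindep : IndepFun κ (fun ω => fun i => Z i ω) P)
    (α : ℝ)
    (hk : ⌈(1 - α) * ((n : ℝ) + 1)⌉₊ ≤ n)
    (R : Fin (n + 1) → Ω → ℝ)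
    (hR : ∀ i ω, R i ω = |(Z i ω).2 - fhat (Z i ω).1| * w (κ ω) (Z i ω).1)
    (qhat : Ω → ℝ)
    (hq : ∀ ω, qhat ω =
      kthSmallest (fun i : Fin n => R i.castSucc ω) ⌈(1 - α) * ((n : ℝ) + 1)⌉₊) :
    ENNReal.ofReal (1 - α) ≤ P {ω | R (Fin.last n) ω ≤ qhat ω} := by
  set k := ⌈(1 - α) * ((n : ℝ) + 1)⌉₊
  set score : Fin K × ((Fin p → ℝ) × ℝ) → ℝ := fun (c, x, y) => |y - fhat x| * w c x
  have hscore : Measurable score :=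
    measurable_from_prod_countable_right fun c =>
      (measurable_snd.sub (hf.comp measurable_fst)).abs.mul ((hw c).comp measurable_fst)
  have hZ : Measurable fun ω i => Z i ω := measurable_pi_lambda _ hZmeas
  have hZexch : Exchangeable P fun ω i => Z i ω := hexch
  have hS : Exchangeable P fun ω i => score (κ ω, Z i ω) :=
    (hZexch.prodMk_of_indepFun hZ hκmeas hκindep).comp (by fun_prop) hscore
  have hrank := hS.le_card_mul_measure_strictRank_lt (by fun_prop) (k := k)
    (by simp only [Fintype.card_fin]; omega) (Fin.last n)
  have hcover : {ω | strictRank (fun i => score (κ ω, Z i ω)) (Fin.last n) < k}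
      ⊆ {ω | R (Fin.last n) ω ≤ qhat ω} := fun ω hω => by
    simpa only [Set.mem_ofPred_eq, hq, hR] using le_kthSmallest_init_of_strictRank_lt _ hk hω
  refine ENNReal.ofReal_le_of_le_natCast_mul (m := n + 1) (k := k) n.succ_pos ?_ ?_
  · push_cast
    exact Nat.le_ceil _
  · rw [Fintype.card_fin] at hrank
    exact hrank.trans (by gcongr)

/-- **Coverage under data-driven weight selection.** For exchangeable pairs
`(X_i, Y_i)`, a fixed measurable predictor `f̂`, fixed measurable positive candidate
weights `w_1, …, w_K`, and a random index `κ` independent of the data, the conformal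
procedure with scores `R_i = |Y_i − f̂(X_i)|·w_κ(X_i)` still satisfies
`P(R_{n+1} ≤ q̂) ≥ 1 − α`. -/
theorem coverage_data_driven_weight_selection
    {Ω : Type*} [MeasurableSpace Ω] (P : Measure Ω) [IsProbabilityMeasure P]
    (p n K : ℕ)
    (Z : Fin (n + 1) → Ω → (Fin p → ℝ) × ℝ)
    (hZmeas : ∀ i, Measurable (Z i))
    (hexch : ∀ π : Equiv.Perm (Fin (n + 1)),
      Measure.map (fun ω => fun i => Z (π i) ω) P
        = Measure.map (fun ω => fun i => Z i ω) P)
    (fhat : (Fin p → ℝ) → ℝ) (hf : Measurable fhat)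
    (w : Fin K → (Fin p → ℝ) → ℝ)
    (hw : ∀ k, Measurable (w k)) (hwpos : ∀ k x, 0 < w k x)
    (κ : Ω → Fin K) (hκmeas : Measurable κ)
    (hκindep : IndepFun κ (fun ω => fun i => Z i ω) P)
    (α : ℝ) (hα : α ∈ Set.Ioo (0 : ℝ) 1)
    (hk : ⌈(1 - α) * ((n : ℝ) + 1)⌉₊ ≤ n)
    (R : Fin (n + 1) → Ω → ℝ)
    (hR : ∀ i ω, R i ω = |(Z i ω).2 - fhat (Z i ω).1| * w (κ ω) (Z i ω).1)
    (qhat : Ω → ℝ)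
    (hq : ∀ ω, qhat ω =
      kthSmallest (fun i : Fin n => R i.castSucc ω) ⌈(1 - α) * ((n : ℝ) + 1)⌉₊) :
    ENNReal.ofReal (1 - α) ≤ P {ω | R (Fin.last n) ω ≤ qhat ω} :=
  coverage_data_driven_weight_selection_general P p n K Z hZmeas hexch fhat hf w hw κ hκmeas hκindep
    α hk R hR qhat hq
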